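/- Let n ≥ 1 and 0 < q ≤ λ < 1. Let φ : ℝⁿ → ℝ be smooth with compact support contained in B(0,1), with Fourier transform φ̂ nonnegative on ℝⁿ and φ̂(ξ) ≥ 1 for |ξ| ≤ 1. If f : ℝⁿ → ℂ is a bounded measurable function with compact support such that ‖M*_φ f‖_{M_q^λ} < ∞, then ∫_{ℝⁿ} f(x) dx = 0. -/

import Mathlib

open MeasureTheory
open scoped ENNReal NNReal BigOperators

noncomputable section

abbrev Euc (n : ℕ) := EuclideanSpace ℝ (Fin n)

/-- Closed axis-parallel cube with lower corner `c` and sidelength `ℓ`. -/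
def cube {n : ℕ} (c : Euc n) (ℓ : ℝ) : Set (Euc n) :=
  {y : Euc n | ∀ i, c i ≤ y i ∧ y i ≤ c i + ℓ}

/-- The cube with the same center as `cube c ℓ` and twice its sidelength. -/
def cube2 {n : ℕ} (c : Euc n) (ℓ : ℝ) : Set (Euc n) :=
  cube (WithLp.toLp 2 (fun i => c i - ℓ / 2) : Euc n) (2 * ℓ)

/-- Morrey "norm" (in `ℝ≥0∞`) of a nonnegative-valued function `u`. -/
def morrey (n : ℕ) (q lam : ℝ) (u : Euc n → ℝ≥0∞) : ℝ≥0∞ :=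
  ⨆ (c : Euc n) (ℓ : ℝ) (_ : 0 < ℓ),
    volume (cube c ℓ) ^ (1 / lam - 1 / q) *
      (∫⁻ y in cube c ℓ, (u y) ^ q) ^ (1 / q)

/-- Dilation `φ_t(x) = t^{-n} φ(x/t)`. -/
def dilat (n : ℕ) (φ : Euc n → ℂ) (t : ℝ) (x : Euc n) : ℂ :=
  (((t ^ n)⁻¹ : ℝ) : ℂ) * φ (t⁻¹ • x)

/-- Convolution `(φ_t ∗ f)(x)`. -/
def conv (n : ℕ) (φ f : Euc n → ℂ) (t : ℝ) (x : Euc n) : ℂ :=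
  ∫ y, dilat n φ t (x - y) * f y

/-- Nontangential maximal function `M*_φ f`. -/
def ntMax (n : ℕ) (φ f : Euc n → ℂ) (x : Euc n) : ℝ≥0∞ :=
  ⨆ (t : ℝ) (_ : 0 < t) (y : Euc n) (_ : dist x y < t), (‖conv n φ f t y‖₊ : ℝ≥0∞)

/-- Smooth (radial) maximal function `M_φ f`. -/
def smMax (n : ℕ) (φ f : Euc n → ℂ) (x : Euc n) : ℝ≥0∞ :=
  ⨆ (t : ℝ) (_ : 0 < t), (‖conv n φ f t x‖₊ : ℝ≥0∞)

/-- Truncated maximal function `m_φ f`. -/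
def trMax (n : ℕ) (φ f : Euc n → ℂ) (x : Euc n) : ℝ≥0∞ :=
  ⨆ (t : ℝ) (_ : 0 < t ∧ t ≤ 1), (‖conv n φ f t x‖₊ : ℝ≥0∞)

/-- Fourier transform `f̂(ξ) = ∫ e^{-i x·ξ} f(x) dx`. -/
def ft (n : ℕ) (f : Euc n → ℂ) (ξ : Euc n) : ℂ :=
  ∫ x, Complex.exp (-(Complex.I * ((inner ℝ x ξ : ℝ) : ℂ))) * f x

/-- A dyadic cube `2^k (m + [0,1)^n)`, recorded by its data. -/
structure DyadicCube (n : ℕ) where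
  k : ℤ
  m : Fin n → ℤ

/-- The underlying set of a dyadic cube. -/
def DyadicCube.set {n : ℕ} (D : DyadicCube n) : Set (Euc n) :=
  {y : Euc n | ∀ i, (2 : ℝ) ^ D.k * (D.m i : ℝ) ≤ y i ∧ y i < (2 : ℝ) ^ D.k * ((D.m i : ℝ) + 1)}

/-- Sidelength of a dyadic cube. -/
def DyadicCube.len {n : ℕ} (D : DyadicCube n) : ℝ := (2 : ℝ) ^ D.k

/-- The cube with the same center as the dyadic cube `D` and twice its sidelength. -/
def DyadicCube.double {n : ℕ} (D : DyadicCube n) : Set (Euc n) :=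
  cube (WithLp.toLp 2 (fun i => (2 : ℝ) ^ D.k * (D.m i : ℝ) - (2 : ℝ) ^ D.k / 2) : Euc n) (2 * (2 : ℝ) ^ D.k)

/-- The norm `‖{s_Q}‖_{λ,q}` of a family of scalars indexed by dyadic cubes. -/
def sNorm (n : ℕ) (q lam : ℝ) (s : DyadicCube n → ℂ) : ℝ≥0∞ :=
  ⨆ J : DyadicCube n,
    (volume J.set ^ (q / lam - 1) *
      ∑' Q : {Q : DyadicCube n // Q.set ⊆ J.set},
        (volume (Q.1).set ^ (1 / q - 1 / lam) * (‖s Q.1‖₊ : ℝ≥0∞)) ^ q) ^ (1 / q)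

/-- `(q,λ,∞)`-atom supported in the set `Q` (with given volume normalization). -/
def IsAtomOn (n : ℕ) (q lam : ℝ) (Q : Set (Euc n)) (a : Euc n → ℂ) : Prop :=
  Measurable a ∧ Function.support a ⊆ Q ∧
    (∀ x, (‖a x‖₊ : ℝ≥0∞) ≤ volume Q ^ (-(1 / lam))) ∧
    ∀ α : Fin n → ℕ, ((∑ i, α i : ℕ) : ℤ) ≤ ⌊(n : ℝ) * (1 / q - 1)⌋ →
      ∫ x, (∏ i, ((x i : ℝ) : ℂ) ^ α i) * a x = 0



theorem volume_cube {n : ℕ} (c : Euc n) (ℓ : ℝ) :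
    volume (cube c ℓ) = ENNReal.ofReal ℓ ^ n := by
  have h : cube c ℓ = (MeasurableEquiv.toLp 2 (Fin n → ℝ)).symm ⁻¹'
      (Set.univ.pi fun i => Set.Icc (c i) (c i + ℓ)) := by
    ext x; simp [cube, Set.mem_pi, MeasurableEquiv.coe_toLp_symm, Set.Icc]
  rw [h, (EuclideanSpace.volume_preserving_symm_measurableEquiv_toLp (Fin n)).measure_preimage
    (MeasurableSet.univ_pi (fun i => measurableSet_Icc)).nullMeasurableSet,
    MeasureTheory.volume_pi_pi]
  simp [Real.volume_Icc]

theorem measurableSet_cube {n : ℕ} (c : Euc n) (ℓ : ℝ) : MeasurableSet (cube c ℓ) := by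
  have h : cube c ℓ = (MeasurableEquiv.toLp 2 (Fin n → ℝ)).symm ⁻¹'
      (Set.univ.pi fun i => Set.Icc (c i) (c i + ℓ)) := by
    ext x; simp [cube, Set.mem_pi, MeasurableEquiv.coe_toLp_symm, Set.Icc]
  rw [h]
  exact (MeasurableEquiv.measurable _) (MeasurableSet.univ_pi fun i => measurableSet_Icc)

theorem norm_le_of_mem_cube {n : ℕ} {L : ℝ} (hL : 0 ≤ L) {x : Euc n}
    (hx : x ∈ cube (WithLp.toLp 2 (fun _ => -L) : Euc n) (2 * L)) : ‖x‖ ≤ n * L := by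
  have hb : ∀ i, |x i| ≤ L := by
    intro i
    obtain ⟨h1, h2⟩ := hx i
    simp only at h1 h2
    rw [abs_le]; constructor <;> linarith
  rw [EuclideanSpace.norm_eq]
  have h1 : ∑ i, ‖x i‖ ^ 2 ≤ (n : ℝ) * L ^ 2 := by
    calc ∑ i, ‖x i‖ ^ 2 ≤ ∑ _i : Fin n, L ^ 2 := by
          apply Finset.sum_le_sum
          intro i _
          have := hb i
          rw [Real.norm_eq_abs]
          nlinarith [abs_nonneg (x i)]
      _ = (n : ℝ) * L ^ 2 := by simp [mul_comm]
  calc Real.sqrt (∑ i, ‖x i‖ ^ 2) ≤ Real.sqrt ((n*L) ^ 2) := by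
        apply Real.sqrt_le_sqrt
        have hn : (n:ℝ) ≤ (n:ℝ)^2 := by exact_mod_cast Nat.le_self_pow two_ne_zero n
        nlinarith [sq_nonneg L]
    _ = n * L := by rw [Real.sqrt_sq (by positivity)]

theorem integrable_of_bdd_compact {n : ℕ} (f : Euc n → ℂ) (hmeas : Measurable f)
    (hbd : ∃ M : ℝ, ∀ x, ‖f x‖ ≤ M) (hsupp : HasCompactSupport f) : Integrable f := by
  obtain ⟨M, hM⟩ := hbd
  apply MeasureTheory.Integrable.mono' (g := (tsupport f).indicator fun _ => M)
  · rw [MeasureTheory.integrable_indicator_iff (isClosed_tsupport f).measurableSet]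
    exact MeasureTheory.integrableOn_const hsupp.isCompact.measure_lt_top.ne
  · exact hmeas.aestronglyMeasurable
  · filter_upwards with z
    by_cases hz : z ∈ tsupport f
    · rw [Set.indicator_of_mem hz]; exact hM z
    · rw [Set.indicator_of_notMem hz, image_eq_zero_of_notMem_tsupport hz]
      simp

theorem aux_tendsto {n : ℕ} (φ : Euc n → ℝ) (hφ : Continuous φ) (hφc : HasCompactSupport φ)
    (f : Euc n → ℂ) (hf : Integrable f) (hmeas : Measurable f) (x₀ : Euc n) :
    Filter.Tendsto (fun t : ℝ => ∫ z, ((φ (x₀ - t⁻¹ • z) : ℝ) : ℂ) * f z) Filter.atTop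
      (nhds (((φ x₀ : ℝ) : ℂ) * ∫ z, f z)) := by
  have hCb : ∀ w, ‖φ w‖ ≤ ⨆ v, ‖φ v‖ :=
    fun w => le_ciSup (hφ.norm.bddAbove_range_of_hasCompactSupport hφc.norm) w
  set Cφ := ⨆ v, ‖φ v‖ with hCφ
  have key : Filter.Tendsto (fun t : ℝ => ∫ z, ((φ (x₀ - t⁻¹ • z) : ℝ) : ℂ) * f z) Filter.atTop
      (nhds (∫ z, ((φ x₀ : ℝ) : ℂ) * f z)) := by
    apply MeasureTheory.tendsto_integral_filter_of_dominated_convergence (fun z => Cφ * ‖f z‖)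
    · filter_upwards with t
      apply MeasureTheory.AEStronglyMeasurable.mul _ hmeas.aestronglyMeasurable
      apply Continuous.aestronglyMeasurable
      exact Complex.continuous_ofReal.comp
        (hφ.comp (continuous_const.sub (continuous_const_smul _)))
    · filter_upwards with t
      filter_upwards with z
      rw [norm_mul, Complex.norm_real]
      exact mul_le_mul_of_nonneg_right (hCb _) (norm_nonneg _)
    · exact hf.norm.const_mul Cφ
    · filter_upwards with z
      apply Filter.Tendsto.mul_const
      apply Complex.continuous_ofReal.continuousAt.tendsto.comp
      have h1 : Filter.Tendsto (fun t : ℝ => x₀ - t⁻¹ • z) Filter.atTop (nhds (x₀ - (0:ℝ) • z)) :=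
        tendsto_const_nhds.sub ((tendsto_inv_atTop_zero).smul_const z)
      simp only [zero_smul, sub_zero] at h1
      exact hφ.continuousAt.tendsto.comp h1
  have heq : ∫ z, ((φ x₀ : ℝ) : ℂ) * f z = ((φ x₀ : ℝ) : ℂ) * ∫ z, f z := by
    simpa [smul_eq_mul] using MeasureTheory.integral_smul ((φ x₀ : ℝ) : ℂ) f
  rwa [heq] at key

theorem conv_eq {n : ℕ} (φ : Euc n → ℂ) (f : Euc n → ℂ) (t : ℝ) (ht : 0 < t) (x₀ : Euc n) :
    conv n φ f t (t • x₀) = (((t ^ n)⁻¹ : ℝ) : ℂ) * ∫ z, φ (x₀ - t⁻¹ • z) * f z := by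
  unfold conv dilat
  have h : ∀ z : Euc n, t⁻¹ • (t • x₀ - z) = x₀ - t⁻¹ • z := by
    intro z; rw [smul_sub, smul_smul, inv_mul_cancel₀ ht.ne', one_smul]
  simp_rw [h, mul_assoc]
  simpa [smul_eq_mul] using
    MeasureTheory.integral_smul (((t ^ n)⁻¹ : ℝ) : ℂ) (fun z => φ (x₀ - t⁻¹ • z) * f z)

theorem ntMax_lower {n : ℕ} (φ : Euc n → ℂ) (f : Euc n → ℂ) (t : ℝ) (ht : 0 < t)
    (x y : Euc n) (hy : dist x y < t) : (‖conv n φ f t y‖₊ : ℝ≥0∞) ≤ ntMax n φ f x := by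
  unfold ntMax
  refine le_iSup_of_le t ?_
  rw [iSup_pos ht]
  refine le_iSup_of_le y ?_
  rw [iSup_pos hy]

theorem real_identity (n : ℕ) (hn : 1 ≤ n) (q lam L K2 c₀ : ℝ) (hq : 0 < q) (hL : 0 < L)
    (hK2 : 0 < K2) (hc₀ : 0 < c₀) (hlam : 0 < lam) :
    ((2*L)^n)^(1/lam - 1/q) * ((c₀ / (K2*L)^n)^q * L^n)^(1/q)
      = ((2:ℝ)^((n:ℝ)*(1/lam - 1/q)) * (c₀ * ((K2:ℝ)^n)⁻¹)) * L^((n:ℝ)*(1/lam - 1)) := by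
  have hc' : 0 < c₀ / (K2*L)^n := div_pos hc₀ (pow_pos (mul_pos hK2 hL) n)
  have e1 : ((2*L)^n : ℝ)^(1/lam - 1/q) = (2:ℝ)^((n:ℝ)*(1/lam - 1/q)) * L^((n:ℝ)*(1/lam - 1/q)) := by
    rw [← Real.rpow_natCast (2*L) n, ← Real.rpow_mul (by positivity),
      Real.mul_rpow (by norm_num) hL.le]
  have e2 : ((c₀ / (K2*L)^n)^q * (L^n : ℝ))^(1/q)
      = (c₀ / (K2*L)^n) * L^((n:ℝ)*(1/q)) := by
    rw [Real.mul_rpow (Real.rpow_nonneg hc'.le _) (by positivity),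
      ← Real.rpow_mul hc'.le, mul_one_div_cancel hq.ne', Real.rpow_one,
      ← Real.rpow_natCast L n, ← Real.rpow_mul hL.le]
  have e3 : c₀ / (K2*L)^n = c₀ * ((K2:ℝ)^n)⁻¹ * L^(-(n:ℝ)) := by
    rw [mul_pow, ← Real.rpow_natCast L n, Real.rpow_neg hL.le, div_eq_mul_inv, mul_inv, mul_assoc]
  rw [e1, e2, e3]
  rw [mul_assoc (c₀ * ((K2:ℝ)^n)⁻¹), ← Real.rpow_add hL]
  rw [show (2:ℝ)^((n:ℝ)*(1/lam - 1/q)) * L^((n:ℝ)*(1/lam - 1/q)) *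
      (c₀ * ((K2:ℝ)^n)⁻¹ * L^(-(n:ℝ) + (n:ℝ)*(1/q)))
    = (2:ℝ)^((n:ℝ)*(1/lam - 1/q)) * (c₀ * ((K2:ℝ)^n)⁻¹) *
      (L^((n:ℝ)*(1/lam - 1/q)) * L^(-(n:ℝ) + (n:ℝ)*(1/q))) from by ring]
  rw [← Real.rpow_add hL]
  congr 1
  ring


theorem stmt7 (n : ℕ) (hn : 1 ≤ n) (q lam : ℝ) (hq : 0 < q) (hqlam : q ≤ lam) (hlam : lam < 1)
    (φ : Euc n → ℝ) (hφ : ContDiff ℝ (⊤ : ℕ∞) φ) (hφc : HasCompactSupport φ)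
    (hφs : tsupport φ ⊆ Metric.ball (0 : Euc n) 1)
    (hφ1 : ∀ ξ : Euc n, (ft n (fun x => (φ x : ℂ)) ξ).im = 0)
    (hφ2 : ∀ ξ : Euc n, 0 ≤ (ft n (fun x => (φ x : ℂ)) ξ).re)
    (hφ3 : ∀ ξ : Euc n, ‖ξ‖ ≤ 1 → 1 ≤ (ft n (fun x => (φ x : ℂ)) ξ).re)
    (f : Euc n → ℂ) (hmeas : Measurable f) (hbd : ∃ M : ℝ, ∀ x, ‖f x‖ ≤ M)
    (hsupp : HasCompactSupport f)
    (hfin : morrey n q lam (ntMax n (fun x => (φ x : ℂ)) f) < ⊤) :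
    ∫ x, f x = 0 := by
  by_contra hA0
  have hnR : (1:ℝ) ≤ (n:ℝ) := by exact_mod_cast hn
  have hlam0 : 0 < lam := lt_of_lt_of_le hq hqlam
  -- find x₀ with φ x₀ ≠ 0
  obtain ⟨x₀, hx₀⟩ : ∃ x₀, φ x₀ ≠ 0 := by
    by_contra h
    push_neg at h
    have h3 := hφ3 0 (by simp)
    simp [ft, h] at h3
    linarith
  have hx₀1 : ‖x₀‖ < 1 := by
    have hmem : x₀ ∈ Metric.ball (0 : Euc n) 1 := hφs (subset_tsupport φ hx₀)
    simpa [mem_ball_zero_iff] using hmem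
  set K : ℝ := 2 / (1 - ‖x₀‖) with hKdef
  have hKe : K * (1 - ‖x₀‖) = 2 := by
    rw [hKdef, div_mul_cancel₀ 2 (by linarith : (1:ℝ) - ‖x₀‖ ≠ 0)]
  have hKpos : 0 < K := div_pos two_pos (by linarith)
  have hK1 : (1:ℝ) ≤ K := by nlinarith [norm_nonneg x₀]
  have hfint : Integrable f := integrable_of_bdd_compact f hmeas hbd hsupp
  set A := ∫ x, f x with hA
  set g : ℝ → ℂ := fun t => ∫ z, ((φ (x₀ - t⁻¹ • z) : ℝ) : ℂ) * f z with hgdef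
  have hglim : Filter.Tendsto g Filter.atTop (nhds (((φ x₀ : ℝ) : ℂ) * A)) :=
    aux_tendsto φ hφ.continuous hφc f hfint hmeas x₀
  set c₀ : ℝ := ‖((φ x₀ : ℝ) : ℂ) * A‖ / 2 with hc₀def
  have hc₀ : 0 < c₀ := by
    have h1 : ((φ x₀ : ℝ) : ℂ) * A ≠ 0 := mul_ne_zero (Complex.ofReal_ne_zero.mpr hx₀) hA0
    have h2 : 0 < ‖((φ x₀ : ℝ) : ℂ) * A‖ := norm_pos_iff.mpr h1
    rw [hc₀def]; linarith
  obtain ⟨T₀, hT₀⟩ : ∃ T₀ : ℝ, ∀ t ≥ T₀, c₀ < ‖g t‖ := by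
    have h2 : c₀ < ‖((φ x₀ : ℝ) : ℂ) * A‖ := by rw [hc₀def]; linarith
    exact Filter.eventually_atTop.mp (hglim.norm.eventually (eventually_gt_nhds h2))
  set T : ℝ := max T₀ 1 with hTdef
  have hT1 : (1:ℝ) ≤ T := le_max_right _ _
  -- lower bound for the nontangential maximal function
  have hnt : ∀ x : Euc n, T ≤ ‖x‖ →
      ENNReal.ofReal (c₀ / (K * ‖x‖) ^ n) ≤ ntMax n (fun x => (φ x : ℂ)) f x := by
    intro x hx
    have hxpos : 0 < ‖x‖ := lt_of_lt_of_le one_pos (le_trans hT1 hx)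
    set t := K * ‖x‖ with htdef
    have htpos : 0 < t := mul_pos hKpos hxpos
    have hty : dist x (t • x₀) < t := by
      rw [dist_eq_norm]
      have h1 : ‖x - t • x₀‖ ≤ ‖x‖ + t * ‖x₀‖ := by
        calc ‖x - t • x₀‖ ≤ ‖x‖ + ‖t • x₀‖ := norm_sub_le _ _
          _ = ‖x‖ + t * ‖x₀‖ := by rw [norm_smul, Real.norm_eq_abs, abs_of_pos htpos]
      have h2 : ‖x‖ + t * ‖x₀‖ < t := by
        rw [htdef]; nlinarith [norm_nonneg x₀]
      linarith
    have htT : T ≤ t := by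
      calc T ≤ ‖x‖ := hx
        _ = 1 * ‖x‖ := (one_mul _).symm
        _ ≤ K * ‖x‖ := mul_le_mul_of_nonneg_right hK1 (norm_nonneg x)
    have hgt : c₀ < ‖g t‖ := hT₀ t (le_trans (le_max_left _ _) htT)
    have hc := conv_eq (fun x => (φ x : ℂ)) f t htpos x₀
    calc ENNReal.ofReal (c₀ / (K * ‖x‖) ^ n)
        ≤ (‖conv n (fun x => (φ x : ℂ)) f t (t • x₀)‖₊ : ℝ≥0∞) := by
          rw [← ENNReal.ofReal_coe_nnreal, coe_nnnorm, hc]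
          apply ENNReal.ofReal_le_ofReal
          rw [norm_mul, Complex.norm_real, Real.norm_eq_abs,
            abs_of_pos (inv_pos.mpr (pow_pos htpos n))]
          rw [div_eq_mul_inv, mul_comm c₀]
          exact mul_le_mul_of_nonneg_left hgt.le (by positivity)
      _ ≤ ntMax n (fun x => (φ x : ℂ)) f x :=
          ntMax_lower (fun x => (φ x : ℂ)) f t htpos x _ hty
  -- Morrey lower bound for large cubes
  set u := ntMax n (fun x => (φ x : ℂ)) f with hu
  set M := morrey n q lam u with hM
  have hMne : M ≠ ⊤ := hfin.ne
  set V : ℝ := (volume (Metric.ball (0 : Euc n) T)).toReal with hV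
  set e₁ : ℝ := 1/lam - 1/q with he₁
  set C : ℝ := (2:ℝ)^((n:ℝ)*e₁) * (c₀ * (((K*n):ℝ)^n)⁻¹) with hC
  set e : ℝ := (n:ℝ)*(1/lam - 1) with he
  have hKn : (0:ℝ) < K * n := mul_pos hKpos (by linarith)
  have hCpos : 0 < C := by
    rw [hC]
    exact mul_pos (Real.rpow_pos_of_pos two_pos _)
      (mul_pos hc₀ (inv_pos.mpr (pow_pos hKn n)))
  have hepos : 0 < e := by
    rw [he]
    have : 1 < 1/lam := by rw [lt_div_iff₀ hlam0]; linarith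
    nlinarith
  have key : ∀ L : ℝ, max T (max 1 V) ≤ L → ENNReal.ofReal (C * L ^ e) ≤ M := by
    intro L hL
    have hLT : T ≤ L := le_trans (le_max_left _ _) hL
    have hL1 : (1:ℝ) ≤ L := le_trans (le_trans (le_max_left _ _) (le_max_right _ _)) hL
    have hLV : V ≤ L := le_trans (le_trans (le_max_right _ _) (le_max_right _ _)) hL
    have hLpos : (0:ℝ) < L := lt_of_lt_of_le one_pos hL1
    set Q : Set (Euc n) := cube (WithLp.toLp 2 (fun _ => -L) : Euc n) (2*L) with hQ
    set S : Set (Euc n) := Q \ Metric.ball (0 : Euc n) T with hS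
    have hQvol : volume Q = ENNReal.ofReal ((2*L)^n) := by
      rw [hQ, volume_cube, ← ENNReal.ofReal_pow (by positivity)]
    set c' : ℝ := c₀ / (K * ((n:ℝ) * L)) ^ n with hc'def
    have hc'pos : 0 < c' := div_pos hc₀ (pow_pos (mul_pos hKpos (by positivity)) n)
    -- pointwise bound on S
    have hptwise : ∀ x ∈ S, ENNReal.ofReal c' ≤ u x := by
      intro x hxS
      obtain ⟨hxQ, hxB⟩ := hxS
      have hxT : T ≤ ‖x‖ := by
        rw [Metric.mem_ball, dist_zero_right] at hxB
        linarith [not_lt.mp hxB]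
      have hxnorm : ‖x‖ ≤ (n:ℝ) * L := norm_le_of_mem_cube hLpos.le hxQ
      refine le_trans ?_ (hnt x hxT)
      apply ENNReal.ofReal_le_ofReal
      rw [hc'def]
      apply div_le_div_of_nonneg_left hc₀.le
      · apply pow_pos (mul_pos hKpos (lt_of_lt_of_le (lt_of_lt_of_le one_pos hT1) hxT))
      · apply pow_le_pow_left₀ (by positivity)
        exact mul_le_mul_of_nonneg_left hxnorm hKpos.le
    -- volume of S
    have hball : volume (Metric.ball (0 : Euc n) T) ≤ ENNReal.ofReal (L^n) := by
      rw [← ENNReal.ofReal_toReal measure_ball_lt_top.ne, ← hV]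
      apply ENNReal.ofReal_le_ofReal
      calc V ≤ L := hLV
        _ ≤ L ^ n := le_self_pow₀ hL1 (by omega)
    have h2vol : ENNReal.ofReal (L^n) + ENNReal.ofReal (L^n) ≤ volume Q := by
      rw [hQvol, ← ENNReal.ofReal_add (by positivity) (by positivity)]
      apply ENNReal.ofReal_le_ofReal
      have h2n : (2:ℝ) * L^n ≤ 2^n * L^n := by
        apply mul_le_mul_of_nonneg_right _ (by positivity)
        calc (2:ℝ) = 2^1 := (pow_one 2).symm
          _ ≤ 2^n := pow_le_pow_right₀ one_le_two hn
      calc L^n + L^n = 2 * L^n := by ring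
        _ ≤ 2^n * L^n := h2n
        _ = (2*L)^n := (mul_pow 2 L n).symm
    have hvolS : ENNReal.ofReal (L^n) ≤ volume S := by
      calc ENNReal.ofReal (L^n)
          = (ENNReal.ofReal (L^n) + ENNReal.ofReal (L^n)) - ENNReal.ofReal (L^n) :=
            (ENNReal.add_sub_cancel_right ENNReal.ofReal_ne_top).symm
        _ ≤ volume Q - volume (Metric.ball (0 : Euc n) T) := tsub_le_tsub h2vol hball
        _ ≤ volume S := le_measure_diff
    have hSmeas : MeasurableSet S :=
      (measurableSet_cube _ _).diff Metric.isOpen_ball.measurableSet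
    -- lintegral lower bound
    have hlint : ENNReal.ofReal c' ^ q * ENNReal.ofReal (L^n) ≤ ∫⁻ y in Q, u y ^ q := by
      calc ENNReal.ofReal c' ^ q * ENNReal.ofReal (L^n)
          ≤ ENNReal.ofReal c' ^ q * volume S := mul_le_mul_right hvolS _
        _ = ∫⁻ _ in S, ENNReal.ofReal c' ^ q := (setLIntegral_const _ _).symm
        _ ≤ ∫⁻ y in S, u y ^ q :=
            setLIntegral_mono' hSmeas (fun x hx => ENNReal.rpow_le_rpow (hptwise x hx) hq.le)
        _ ≤ ∫⁻ y in Q, u y ^ q := lintegral_mono_set Set.diff_subset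
    -- the Morrey sup dominates this cube's term
    have hterm : volume Q ^ e₁ * (∫⁻ y in Q, u y ^ q) ^ (1/q) ≤ M := by
      rw [hM, morrey]
      refine le_iSup_of_le (WithLp.toLp 2 (fun _ => -L) : Euc n) ?_
      refine le_iSup_of_le (2*L) ?_
      refine le_iSup_of_le (by linarith : (0:ℝ) < 2*L) ?_
      rw [← hQ, ← he₁]
    -- assemble
    have hlow : ENNReal.ofReal (C * L ^ e)
        ≤ volume Q ^ e₁ * (∫⁻ y in Q, u y ^ q) ^ (1/q) := by
      have h1 : (ENNReal.ofReal c' ^ q * ENNReal.ofReal (L^n)) ^ (1/q)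
          ≤ (∫⁻ y in Q, u y ^ q) ^ (1/q) := ENNReal.rpow_le_rpow hlint (by positivity)
      have heq : ENNReal.ofReal (C * L ^ e)
          = volume Q ^ e₁ * (ENNReal.ofReal c' ^ q * ENNReal.ofReal (L^n)) ^ (1/q) := by
        rw [hQvol, ENNReal.ofReal_rpow_of_pos (by positivity),
          ENNReal.ofReal_rpow_of_pos hc'pos,
          ← ENNReal.ofReal_mul (by positivity),
          ENNReal.ofReal_rpow_of_pos (mul_pos (Real.rpow_pos_of_pos hc'pos q) (by positivity)),
          ← ENNReal.ofReal_mul (by positivity)]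
        congr 1
        have hid := real_identity n hn q lam L (K * n) c₀ hq hLpos hKn hc₀ hlam0
        rw [hc'def, show K * ((n:ℝ) * L) = (K * n) * L from by ring, hid, ← he₁, ← hC, ← he]
      rw [heq]
      exact mul_le_mul_right h1 _
    exact le_trans hlow hterm
  -- conclude: contradiction with finiteness
  set L : ℝ := max (max T (max 1 V)) (((M.toReal + 1)/C) ^ (1/e)) with hL
  have h1 : ENNReal.ofReal (C * L ^ e) ≤ M := key L (le_max_left _ _)
  have h2 : C * L ^ e ≤ M.toReal := (ENNReal.ofReal_le_iff_le_toReal hMne).mp h1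
  have hMnn : 0 ≤ M.toReal := ENNReal.toReal_nonneg
  have h3 : (M.toReal + 1)/C ≤ L ^ e := by
    have hLb : ((M.toReal + 1)/C)^(1/e) ≤ L := le_max_right _ _
    calc (M.toReal + 1)/C = (((M.toReal + 1)/C)^(1/e))^e := by
          rw [← Real.rpow_mul (by positivity), one_div_mul_cancel hepos.ne', Real.rpow_one]
      _ ≤ L ^ e := Real.rpow_le_rpow (Real.rpow_nonneg (by positivity) _) hLb hepos.le
  rw [div_le_iff₀ hCpos] at h3
  nlinarith


end
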